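/- Let n ≥ 2 and let m_1, …, m_n be positive real numbers. Define F : (ℝ²)ⁿ → (ℝ²)ⁿ by F_i(q_1, …, q_n) = q_i − Σ_{j≠i} (m_j / |q_i − q_j|³)(q_i − q_j) on configurations of pairwise distinct points, and let G : (ℝ²)^{n-2} × ℝ → (ℝ²)^{n-2} × ℝ be the reduced map on variables (q_1, …, q_{n-2}, x_{n-1}) obtained by substituting q_{n-1} = (x_{n-1}, 0) and q_n = −(1/m_n)(Σ_{i=1}^{n-2} m_i q_i + m_{n-1}(x_{n-1},0)), whose components are F_i for i = 1, …, n−2 together with the first (x) component of F_{n-1}. Suppose (q_1, …, q_{n-2}, x_{n-1}) is a zero of G at which DG is invertible, the induced points q_1, …, q_n are pairwise distinct, and x_{n-1} ≠ x_n (first coordinates). Then q = (q_1, …, q_{n-2}, (x_{n-1},0), q_n) is a normalized central configuration and it is non-degenerate, i.e. rank DF(q) = 2n − 1. -/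

import Mathlib

open Finset

abbrev E2 : Type := EuclideanSpace ℝ (Fin 2)

/-- The point `(a, b)` of the Euclidean plane. -/
noncomputable def pt (a b : ℝ) : E2 := (WithLp.equiv 2 (Fin 2 → ℝ)).symm ![a, b]

/-- `F_i(q) = q_i − Σ_{j≠i} (m_j / |q_i − q_j|³)(q_i − q_j)`; normalized central
configurations are the (pairwise distinct) zeros of `F`. -/
noncomputable def Fmap {ι : Type} [Fintype ι] [DecidableEq ι] (m : ι → ℝ) (q : ι → E2) :
    ι → E2 :=
  fun i => q i - ∑ j ∈ Finset.univ.filter (· ≠ i), (m j / ‖q i - q j‖ ^ 3) • (q i - q j)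

/-- The configuration of `n + 2` bodies built from the reduced variables
`(q_1, …, q_n, x_{n+1})`: body `n` (0-based) is `(x, 0)` and the last body is obtained
from the center-of-mass relation. -/
noncomputable def redConfig (n : ℕ) (m : Fin (n + 2) → ℝ) (z : (Fin n → E2) × ℝ) :
    Fin (n + 2) → E2 :=
  Fin.snoc (Fin.snoc z.1 (pt z.2 0))
    ((-(m (Fin.last (n + 1)))⁻¹) •
      (∑ i : Fin n, m i.castSucc.castSucc • z.1 i + m ((Fin.last n).castSucc) • pt z.2 0))

/-- The reduced map `G`: the components `F_i` for the first `n` bodies and the first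
(`x`) component of `F` at body `n`, evaluated on the reduced configuration. -/
noncomputable def Gmap (n : ℕ) (m : Fin (n + 2) → ℝ) (z : (Fin n → E2) × ℝ) :
    (Fin n → E2) × ℝ :=
  (fun i => Fmap m (redConfig n m z) i.castSucc.castSucc,
   Fmap m (redConfig n m z) ((Fin.last n).castSucc) 0)

/-!
Both `∑ mᵢ Fᵢ(q) = ∑ mᵢ qᵢ` (linear momentum) and `∑ mᵢ qᵢ ∧ Fᵢ(q) = 0` (angular momentum) hold
identically, because the mutual forces cancel in pairs. At a zero of `G` every `Fᵢ` vanishes except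
possibly `F_{n-1} = (0, b)` and `F_n`. The centre of mass is at the origin, so linear momentum gives
`m_n F_n = -m_{n-1} F_{n-1}`, and angular momentum then reduces to `m_{n-1} b (x_{n-1} - x_n) = 0`;
hence `b = 0` and `q` is a central configuration.

For non-degeneracy, rotation invariance of `F` puts the infinitesimal rotation `J q` in
`ker DF(q)`. Conversely, differentiating linear momentum shows that every `v ∈ ker DF(q)` has
`∑ mᵢ vᵢ = 0`; if moreover the `y`-component of `v_{n-1}` vanishes, `v` is the image of a vector
in `ker DG`, so `v = 0`. Hence `ker DF(q)` is a line.
-/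

theorem sum_sum_filter_ne_eq_zero_of_antisymm {ι M : Type*} [Fintype ι] [DecidableEq ι]
    [AddCommGroup M] [Module ℝ M] (f : ι → ι → M) (hf : ∀ i j, f j i = -f i j) :
    ∑ i, ∑ j ∈ univ.filter (· ≠ i), f i j = 0 := by
  set S := ∑ i, ∑ j ∈ univ.filter (· ≠ i), f i j
  have hS : S = -S :=
    calc S = ∑ j, ∑ i ∈ univ.filter (· ≠ j), f i j :=
          Finset.sum_comm' fun i j => by simp [ne_comm]
      _ = -S := by
          simp only [S, ← sum_neg_distrib]
          exact sum_congr rfl fun j _ => sum_congr rfl fun i _ => hf j i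
  have h2S : (2 : ℝ) • S = 0 := by rw [two_smul]; nth_rewrite 2 [hS]; exact add_neg_cancel S
  simpa using h2S

theorem E2.ext {u v : E2} (h0 : u 0 = v 0) (h1 : u 1 = v 1) : u = v := by
  ext k; fin_cases k <;> assumption

theorem pt_add_fst (a b : ℝ) : pt (a + b) 0 = pt a 0 + pt b 0 :=
  E2.ext (by simp [pt]) (by simp [pt])

theorem pt_mul_fst (c a : ℝ) : pt (c * a) 0 = c • pt a 0 :=
  E2.ext (by simp [pt]) (by simp [pt])

theorem sum_smul_Fmap {ι : Type} [Fintype ι] [DecidableEq ι] (m : ι → ℝ) (q : ι → E2) :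
    ∑ i, m i • Fmap m q i = ∑ i, m i • q i := by
  have hpairs : ∑ i, ∑ j ∈ univ.filter (· ≠ i),
      (m i * (m j / ‖q i - q j‖ ^ 3)) • (q i - q j) = 0 :=
    sum_sum_filter_ne_eq_zero_of_antisymm _ fun i j => by
      rw [norm_sub_rev, ← neg_sub (q i), smul_neg, mul_div_left_comm]
  have hsplit : ∀ i, m i • Fmap m q i = m i • q i - ∑ j ∈ univ.filter (· ≠ i),
      (m i * (m j / ‖q i - q j‖ ^ 3)) • (q i - q j) := fun i => by
    simp only [Fmap, smul_sub, smul_sum, smul_smul]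
  simp only [hsplit, sum_sub_distrib, hpairs, sub_zero]

noncomputable def wedge : E2 →ₗ[ℝ] E2 →ₗ[ℝ] ℝ :=
  LinearMap.mk₂ ℝ (fun u v => u 0 * v 1 - u 1 * v 0)
    (fun _ _ _ => by simp only [PiLp.add_apply]; ring)
    (fun _ _ _ => by simp only [PiLp.smul_apply, smul_eq_mul]; ring)
    (fun _ _ _ => by simp only [PiLp.add_apply]; ring)
    (fun _ _ _ => by simp only [PiLp.smul_apply, smul_eq_mul]; ring)

theorem wedge_apply (u v : E2) : wedge u v = u 0 * v 1 - u 1 * v 0 := rfl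

theorem wedge_self (u : E2) : wedge u u = 0 := by rw [wedge_apply]; ring

theorem sum_mul_wedge_Fmap {ι : Type} [Fintype ι] [DecidableEq ι] (m : ι → ℝ) (q : ι → E2) :
    ∑ i, m i * wedge (q i) (Fmap m q i) = 0 := by
  have hpairs : ∑ i, ∑ j ∈ univ.filter (· ≠ i),
      m i * (m j / ‖q i - q j‖ ^ 3) * wedge (q i) (q j) = 0 :=
    sum_sum_filter_ne_eq_zero_of_antisymm _ fun i j => by
      rw [norm_sub_rev, wedge_apply, wedge_apply]; ring
  simpa [Fmap, wedge_self, mul_sum, mul_assoc] using hpairs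

theorem differentiableAt_Fmap {ι : Type} [Fintype ι] [DecidableEq ι] (m : ι → ℝ) {q : ι → E2}
    (hq : Function.Injective q) : DifferentiableAt ℝ (Fmap m) q := by
  refine differentiableAt_pi.mpr fun i => (differentiableAt_apply i q).sub
    (DifferentiableAt.fun_sum fun j hj => ?_)
  have hne : q i - q j ≠ 0 := sub_ne_zero.mpr (hq.ne (by simpa [eq_comm] using hj))
  have hdiff : DifferentiableAt ℝ (fun p : ι → E2 => p i - p j) q :=
    (differentiableAt_apply i q).sub (differentiableAt_apply j q)
  exact ((hdiff.norm ℝ hne).pow 3 |>.inv (pow_ne_zero 3 (norm_ne_zero_iff.mpr hne))).const_mul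
    (m j) |>.smul hdiff

theorem Fmap_comp_linearIsometry {ι : Type} [Fintype ι] [DecidableEq ι] (m : ι → ℝ) (q : ι → E2)
    (R : E2 →ₗᵢ[ℝ] E2) : Fmap m (fun i => R (q i)) = fun i => R (Fmap m q i) := by
  funext i
  simp only [Fmap, map_sub, map_sum, map_smul]
  simp only [← map_sub, LinearIsometry.norm_map]

theorem fderiv_apply_eq_zero_of_comp_const {E F : Type*} [NormedAddCommGroup E] [NormedSpace ℝ E]
    [NormedAddCommGroup F] [NormedSpace ℝ F] {f : E → F} {x v : E} {γ : ℝ → E}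
    (hf : DifferentiableAt ℝ f x) (hγ : HasDerivAt γ v 0) (hγ0 : γ 0 = x)
    (hconst : ∀ t, f (γ t) = f x) : fderiv ℝ f x v = 0 := by
  subst hγ0
  exact (hf.hasFDerivAt.comp_hasDerivAt 0 hγ).unique <| by
    simpa only [Function.comp_def, hconst] using hasDerivAt_const (0 : ℝ) (f (γ 0))

theorem Orientation.hasDerivAt_rotation {V : Type*} [NormedAddCommGroup V] [InnerProductSpace ℝ V]
    [Fact (Module.finrank ℝ V = 2)] (o : Orientation ℝ V (Fin 2)) (x : V) :
    HasDerivAt (fun θ : ℝ => o.rotation θ x) (o.rightAngleRotation x) 0 := by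
  simp only [o.rotation_apply, Real.Angle.cos_coe, Real.Angle.sin_coe]
  simpa using ((Real.hasDerivAt_cos 0).smul_const x).fun_add
    ((Real.hasDerivAt_sin 0).smul_const (o.rightAngleRotation x))

instance : Fact (Module.finrank ℝ E2 = 2) := ⟨finrank_euclideanSpace_fin⟩

theorem fderiv_Fmap_rightAngleRotation {ι : Type} [Fintype ι] [DecidableEq ι] (m : ι → ℝ)
    {q : ι → E2} (hq : Function.Injective q) (hF : Fmap m q = 0) (o : Orientation ℝ E2 (Fin 2)) :
    fderiv ℝ (Fmap m) q (fun i => o.rightAngleRotation (q i)) = 0 :=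
  fderiv_apply_eq_zero_of_comp_const (γ := fun θ i => o.rotation θ (q i))
    (differentiableAt_Fmap m hq) (hasDerivAt_pi.mpr fun i => o.hasDerivAt_rotation (q i))
    (by simp) fun θ =>
      (Fmap_comp_linearIsometry m q (o.rotation θ).toLinearIsometry).trans
        (by simp [hF, Pi.zero_def])

theorem sum_smul_fderiv_Fmap {ι : Type} [Fintype ι] [DecidableEq ι] (m : ι → ℝ) {q : ι → E2}
    (hq : Function.Injective q) (v : ι → E2) :
    ∑ i, m i • fderiv ℝ (Fmap m) q v i = ∑ i, m i • v i := by
  let S : (ι → E2) →L[ℝ] E2 := ∑ i, m i • ContinuousLinearMap.proj i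
  have hS : ∀ w, S w = ∑ i, m i • w i := fun w => by simp [S]
  have hSF : (fun w => S (Fmap m w)) = S := funext fun w => by rw [hS, hS, sum_smul_Fmap]
  have hderiv := S.hasFDerivAt.comp q (differentiableAt_Fmap m hq).hasFDerivAt
  rw [Function.comp_def, hSF] at hderiv
  simpa only [hS, ContinuousLinearMap.comp_apply] using
    congrArg (· v) (hderiv.unique S.hasFDerivAt)

theorem Orientation.rightAngleRotation_comp_ne_zero {ι V : Type*} [Nontrivial ι]
    [NormedAddCommGroup V] [InnerProductSpace ℝ V] [Fact (Module.finrank ℝ V = 2)]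
    (o : Orientation ℝ V (Fin 2)) {q : ι → V} (hq : Function.Injective q) :
    (fun i => o.rightAngleRotation (q i)) ≠ 0 := by
  obtain ⟨i, j, hij⟩ := exists_pair_ne ι
  intro h
  have hi : q i = 0 := by simpa using congrFun h i
  have hj : q j = 0 := by simpa using congrFun h j
  exact hij (hq (hi.trans hj.symm))

theorem LinearMap.finrank_range_eq_finrank_sub_one {K V W : Type*} [Field K] [AddCommGroup V]
    [Module K V] [FiniteDimensional K V] [AddCommGroup W] [Module K W] (f : V →ₗ[K] W)
    (φ : V →ₗ[K] K) (hφ : ∀ v, f v = 0 → φ v = 0 → v = 0) {v₀ : V} (hv₀ : f v₀ = 0)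
    (hne : v₀ ≠ 0) : Module.finrank K (range f) = Module.finrank K V - 1 := by
  have hle : Module.finrank K (ker f) ≤ 1 := by
    have hinj : Function.Injective (φ ∘ₗ (ker f).subtype) := by
      rw [← LinearMap.ker_eq_bot, Submodule.eq_bot_iff]
      intro v hv
      exact Subtype.ext (hφ v v.2 hv)
    simpa using LinearMap.finrank_le_finrank_of_injective hinj
  have hpos : 0 < Module.finrank K (ker f) := by
    have : Nontrivial (ker f) :=
      nontrivial_of_ne ⟨v₀, hv₀⟩ 0 fun h => hne (congrArg Subtype.val h)
    exact Module.finrank_pos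
  have := LinearMap.finrank_range_add_finrank_ker f
  omega

section Reduced

variable (n : ℕ) (m : Fin (n + 2) → ℝ) (z : (Fin n → E2) × ℝ)

@[simp] theorem redConfig_castSucc_castSucc (i : Fin n) :
    redConfig n m z i.castSucc.castSucc = z.1 i := by
  simp [redConfig]

@[simp] theorem redConfig_castSucc_last : redConfig n m z (Fin.last n).castSucc = pt z.2 0 := by
  simp [redConfig]

theorem redConfig_last : redConfig n m z (Fin.last (n + 1)) =
    (-(m (Fin.last (n + 1)))⁻¹) •
      (∑ i : Fin n, m i.castSucc.castSucc • z.1 i + m (Fin.last n).castSucc • pt z.2 0) := by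
  simp [redConfig]

theorem sum_smul_redConfig (hm : m (Fin.last (n + 1)) ≠ 0) :
    ∑ i, m i • redConfig n m z i = 0 := by
  simp only [Fin.sum_univ_castSucc, redConfig_castSucc_castSucc, redConfig_castSucc_last,
    redConfig_last]
  rw [smul_smul, mul_neg, mul_inv_cancel₀ hm, neg_one_smul, add_neg_cancel]

theorem Fmap_redConfig_eq_zero (hm : ∀ i, m i ≠ 0) (hG : Gmap n m z = 0)
    (hx : z.2 ≠ redConfig n m z (Fin.last (n + 1)) 0) : Fmap m (redConfig n m z) = 0 := by
  set q := redConfig n m z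
  have hF : ∀ i : Fin n, Fmap m q i.castSucc.castSucc = 0 := fun i =>
    congrFun (congrArg Prod.fst hG) i
  have hFk0 : Fmap m q (Fin.last n).castSucc 0 = 0 := congrArg Prod.snd hG
  have hmomentum : m (Fin.last (n + 1)) • Fmap m q (Fin.last (n + 1)) =
      -(m (Fin.last n).castSucc • Fmap m q (Fin.last n).castSucc) := by
    have h := sum_smul_Fmap m q
    rw [sum_smul_redConfig n m z (hm _)] at h
    simp only [Fin.sum_univ_castSucc, hF, smul_zero, sum_const_zero, zero_add] at h
    exact eq_neg_of_add_eq_zero_right h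
  have hangular : m (Fin.last n).castSucc *
      wedge (q (Fin.last n).castSucc - q (Fin.last (n + 1))) (Fmap m q (Fin.last n).castSucc) =
        0 := by
    have h := sum_mul_wedge_Fmap m q
    simp only [Fin.sum_univ_castSucc, hF, map_zero, mul_zero, sum_const_zero, zero_add] at h
    have hmomentum' := congrArg (wedge (q (Fin.last (n + 1)))) hmomentum
    simp only [map_neg, map_smul, smul_eq_mul] at hmomentum'
    rw [map_sub, LinearMap.sub_apply]
    linear_combination h - hmomentum'
  have hFk1 : Fmap m q (Fin.last n).castSucc 1 = 0 := by
    have hqk : q (Fin.last n).castSucc = pt z.2 0 := redConfig_castSucc_last n m z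
    rw [wedge_apply, hFk0, PiLp.sub_apply, PiLp.sub_apply, hqk] at hangular
    simpa [pt, hm _, sub_eq_zero, hx] using hangular
  have hFk : Fmap m q (Fin.last n).castSucc = 0 := E2.ext hFk0 hFk1
  have hFl : Fmap m q (Fin.last (n + 1)) = 0 := by
    simpa [hFk, hm _] using hmomentum
  funext i
  exact Fin.lastCases hFl (Fin.lastCases hFk fun j => hF j) i

noncomputable def redConfigₗ : ((Fin n → E2) × ℝ) →ₗ[ℝ] (Fin (n + 2) → E2) where
  toFun := redConfig n m
  map_add' z w := by
    funext i
    refine Fin.lastCases ?_ (Fin.lastCases ?_ fun k => ?_) i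
    · simp only [redConfig_last, Prod.fst_add, Prod.snd_add, Pi.add_apply, smul_add,
        sum_add_distrib, pt_add_fst]
      module
    · simp [pt_add_fst]
    · simp
  map_smul' c z := by
    funext i
    refine Fin.lastCases ?_ (Fin.lastCases ?_ fun k => ?_) i
    · simp only [redConfig_last, Prod.smul_fst, Prod.smul_snd, Pi.smul_apply, smul_eq_mul,
        pt_mul_fst, smul_add, smul_sum, smul_comm c, RingHom.id_apply]
    · simp [pt_mul_fst]
    · simp

def redProj : (Fin (n + 2) → E2) →ₗ[ℝ] (Fin n → E2) × ℝ where
  toFun w := (fun i => w i.castSucc.castSucc, w (Fin.last n).castSucc 0)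
  map_add' _ _ := rfl
  map_smul' _ _ := rfl

theorem redProj_apply (w : Fin (n + 2) → E2) :
    redProj n w = (fun i => w i.castSucc.castSucc, w (Fin.last n).castSucc 0) := rfl

theorem Gmap_eq_comp : Gmap n m = redProj n ∘ Fmap m ∘ redConfigₗ n m := rfl

theorem redConfig_redProj (hm : m (Fin.last (n + 1)) ≠ 0) {v : Fin (n + 2) → E2}
    (hv : ∑ i, m i • v i = 0) (hy : v (Fin.last n).castSucc 1 = 0) :
    redConfig n m (redProj n v) = v := by
  have hk : pt (v (Fin.last n).castSucc 0) 0 = v (Fin.last n).castSucc :=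
    E2.ext rfl (by simp [pt, hy])
  funext i
  refine Fin.lastCases ?_ (Fin.lastCases ?_ fun k => ?_) i
  · rw [Fin.sum_univ_castSucc, Fin.sum_univ_castSucc] at hv
    rw [redConfig_last, redProj_apply, hk, eq_neg_of_add_eq_zero_left hv, neg_smul_neg, smul_smul,
      inv_mul_cancel₀ hm, one_smul]
  · simpa [redProj_apply] using hk
  · exact redConfig_castSucc_castSucc n m _ k

theorem fderiv_Gmap (hinj : Function.Injective (redConfig n m z)) :
    fderiv ℝ (Gmap n m) z = (redProj n).toContinuousLinearMap ∘L
      fderiv ℝ (Fmap m) (redConfig n m z) ∘L (redConfigₗ n m).toContinuousLinearMap := by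
  rw [Gmap_eq_comp]
  exact ((redProj n).toContinuousLinearMap.hasFDerivAt.comp z <|
    (differentiableAt_Fmap m hinj).hasFDerivAt.comp z
      (redConfigₗ n m).toContinuousLinearMap.hasFDerivAt).fderiv

theorem eq_zero_of_fderiv_Fmap_redConfig_apply_eq_zero (hm : m (Fin.last (n + 1)) ≠ 0)
    (hinj : Function.Injective (redConfig n m z))
    (hDG : Function.Injective (fderiv ℝ (Gmap n m) z)) {v : Fin (n + 2) → E2}
    (hv : fderiv ℝ (Fmap m) (redConfig n m z) v = 0) (hy : v (Fin.last n).castSucc 1 = 0) :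
    v = 0 := by
  have hv' : redConfig n m (redProj n v) = v :=
    redConfig_redProj n m hm (by rw [← sum_smul_fderiv_Fmap m hinj, hv]; simp) hy
  have hπv : redProj n v = 0 := hDG <| by
    rw [fderiv_Gmap n m z hinj, map_zero]
    change redProj n (fderiv ℝ (Fmap m) (redConfig n m z) (redConfig n m (redProj n v))) = 0
    rw [hv', hv, map_zero]
  rw [← hv', hπv]
  exact (redConfigₗ n m).map_zero

end Reduced

theorem stmt4 (n : ℕ) (m : Fin (n + 2) → ℝ) (hm : ∀ i, 0 < m i)
    (z : (Fin n → E2) × ℝ)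
    (hG : Gmap n m z = 0)
    (hDG : Function.Bijective (fderiv ℝ (Gmap n m) z))
    (hinj : Function.Injective (redConfig n m z))
    (hxn : z.2 ≠ redConfig n m z (Fin.last (n + 1)) 0) :
    Fmap m (redConfig n m z) = 0 ∧
    Module.finrank ℝ
      (LinearMap.range ((fderiv ℝ (Fmap m) (redConfig n m z) :
        (Fin (n + 2) → E2) →ₗ[ℝ] (Fin (n + 2) → E2)))) = 2 * (n + 2) - 1 := by
  have hm0 : ∀ i, m i ≠ 0 := fun i => (hm i).ne'
  have hF := Fmap_redConfig_eq_zero n m z hm0 hG hxn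
  refine ⟨hF, ?_⟩
  let o : Orientation ℝ E2 (Fin 2) := (EuclideanSpace.basisFun (Fin 2) ℝ).toBasis.orientation
  have hdim : Module.finrank ℝ (Fin (n + 2) → E2) = 2 * (n + 2) := by
    simp [Module.finrank_pi_fintype, mul_comm]
  rw [← hdim]
  exact LinearMap.finrank_range_eq_finrank_sub_one _
    ((EuclideanSpace.proj 1 : E2 →L[ℝ] ℝ).toLinearMap ∘ₗ LinearMap.proj (Fin.last n).castSucc)
    (fun v hv hy => eq_zero_of_fderiv_Fmap_redConfig_apply_eq_zero n m z (hm0 _) hinj hDG.1 hv hy)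
    (fderiv_Fmap_rightAngleRotation m hinj hF o) (o.rightAngleRotation_comp_ne_zero hinj)
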